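/- Let α > −1, let f* : ℝ → ℂ be continuous, 2π-periodic with |f*(t)| ≤ 1 for all t, and let f = P_α[f*]. Then for every z ∈ 𝔻, |f(z) − ((1−|z|²)/(1+|z|²))·G_α(z)| ≤ (4/π) · (sup_{0≤θ≤2π} |g_α(|z| e^{iθ})|) · arctan|z|. In particular, if α ≥ 0 the right-hand side is at most (2^{α+2}/π)·arctan|z|, and if −1 < α < 0 it is at most (4/π)·(1−|z|)^α·arctan|z|. -/

import Mathlib

/-!
For `|w| < 1` the `α`-harmonic Poisson kernel factors as `P_α(w) = P(w) g_α(w)`, where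
`P(w) = (1 - |w|²)/|1 - w|²` is the classical Poisson kernel. Hence
`f(z) - c G_α(z) = (1/2π) ∫ (P(z e^{-it}) - c) g_α(z e^{-it}) f*(t) dt` with
`c = (1 - r²)/(1 + r²)`, `r = |z|`, and the left side is at most `sup |g_α|` times the mean of
`|P - c|` over the circle. In polar form `P = (1 - r²)/(1 - 2r cos s + r²)` exceeds `c` exactly
where `cos s > 0`, and the antiderivative `2 arctan (((1 + r)/(1 - r)) tan (s/2))` gives
`∫ |P - c| = 8 arctan r` over a period. The particular bounds follow from
`|g_α(w)| = ((1 - r²)/|1 - w̄|)^α` and `1 - r ≤ (1 - r²)/|1 - w̄| ≤ 1 + r` for `|w| = r`.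
-/

open Complex MeasureTheory Real Set

noncomputable section

/-- Wirtinger derivative `∂f = (f_x - i f_y)/2` of a function `f : ℂ → ℂ`,
viewed as a real-differentiable map. -/
def wdz (f : ℂ → ℂ) (z : ℂ) : ℂ :=
  (fderiv ℝ f z 1 - Complex.I * fderiv ℝ f z Complex.I) / 2

/-- Wirtinger derivative `∂̄f = (f_x + i f_y)/2`. -/
def wdzbar (f : ℂ → ℂ) (z : ℂ) : ℂ :=
  (fderiv ℝ f z 1 + Complex.I * fderiv ℝ f z Complex.I) / 2

/-- The `α`-harmonic Poisson kernel
`P_α(z) = (1-|z|²)^{α+1} / ((1-z)(1-z̄)^{α+1})` (principal powers). -/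
def poissonKernelAlpha (α : ℝ) (z : ℂ) : ℂ :=
  (((1 - ‖z‖ ^ 2) ^ (α + 1) : ℝ) : ℂ) /
    ((1 - z) * (1 - (starRingEnd ℂ) z) ^ ((α : ℂ) + 1))

/-- The `α`-harmonic extension `P_α[F](z) = (1/2π) ∫₀^{2π} P_α(z e^{-it}) F(t) dt`. -/
def poissonExt (α : ℝ) (F : ℝ → ℂ) (z : ℂ) : ℂ :=
  (1 / (2 * Real.pi) : ℂ) *
    ∫ t in (0:ℝ)..(2 * Real.pi), poissonKernelAlpha α (z * Complex.exp (-Complex.I * t)) * F t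

/-- The angular derivative `∂_θ f(z) = i (z ∂f(z) - z̄ ∂̄f(z))`. -/
def angularDeriv (f : ℂ → ℂ) (z : ℂ) : ℂ :=
  Complex.I * (z * wdz f z - (starRingEnd ℂ) z * wdzbar f z)

/-- The integral mean `M_p(r,g) = ((1/2π) ∫₀^{2π} |g(r e^{iθ})|^p dθ)^{1/p}`. -/
def Mp (p : ℝ) (r : ℝ) (g : ℂ → ℂ) : ℝ :=
  ((1 / (2 * Real.pi)) *
      ∫ θ in (0:ℝ)..(2 * Real.pi),
        ‖g ((r : ℂ) * Complex.exp (Complex.I * θ))‖ ^ p) ^ (1 / p)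

/-- The boundary `L^p` norm `‖G‖_{L^p} = ((1/2π) ∫₀^{2π} |G(t)|^p dt)^{1/p}`. -/
def lpNormBdry (p : ℝ) (G : ℝ → ℂ) : ℝ :=
  ((1 / (2 * Real.pi)) * ∫ t in (0:ℝ)..(2 * Real.pi), ‖G t‖ ^ p) ^ (1 / p)

/-- The constant `c_α = Γ(α+1)/Γ(α/2+1)²`. -/
def cAlpha (α : ℝ) : ℝ := Real.Gamma (α + 1) / (Real.Gamma (α / 2 + 1)) ^ 2

/-- `I_α(r) = (1/2π) ∫₀^{2π} (1-r²)^α / |1 - r e^{it}|^{α+1} dt`. -/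
def Ialpha (α r : ℝ) : ℝ :=
  (1 / (2 * Real.pi)) *
    ∫ t in (0:ℝ)..(2 * Real.pi),
      (1 - r ^ 2) ^ α / (‖1 - (r : ℂ) * Complex.exp (Complex.I * t)‖) ^ (α + 1)

/-- `g_α(z) = ((1-|z|²)/(1-z̄))^α` (principal complex power). -/
def gAlpha (α : ℝ) (z : ℂ) : ℂ :=
  ((((1 - ‖z‖ ^ 2 : ℝ)) : ℂ) / (1 - (starRingEnd ℂ) z)) ^ (α : ℂ)

end

noncomputable def poissonKernelPolar (r s : ℝ) : ℝ :=
  (1 - r ^ 2) / (1 - 2 * r * Real.cos s + r ^ 2)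

/-- `M_∞(r, g)`, the supremum of `|g|` on the circle `|w| = r`. -/
noncomputable def circleSupNorm (r : ℝ) (g : ℂ → ℂ) : ℝ :=
  ⨆ θ : Icc (0 : ℝ) (2 * π), ‖g ((r : ℂ) * cexp (I * (θ : ℝ)))‖

lemma Real.arctan_one_add_div_one_sub {x : ℝ} (hx : x < 1) :
    Real.arctan ((1 + x) / (1 - x)) = π / 4 + Real.arctan x := by
  rw [← Real.arctan_one, Real.arctan_add (by linarith), one_mul]

lemma Complex.ofReal_div_cpow {a : ℝ} (ha : 0 < a) {v : ℂ} (hv : v ≠ 0) (hv' : v.arg ≠ π)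
    (s : ℂ) : ((a : ℂ) / v) ^ s = (a : ℂ) ^ s / v ^ s := by
  have ha' : (a : ℂ) ≠ 0 := ofReal_ne_zero.mpr ha.ne'
  rw [div_eq_mul_inv, cpow_def_of_ne_zero (mul_ne_zero ha' (inv_ne_zero hv)),
    log_ofReal_mul ha (inv_ne_zero hv), ofReal_log ha.le, log_inv v hv', add_mul, neg_mul,
    Complex.exp_add, Complex.exp_neg, ← cpow_def_of_ne_zero ha', ← cpow_def_of_ne_zero hv,
    div_eq_mul_inv]

section PoissonKernelPolar

variable {r ρ : ℝ}

lemma one_sub_two_mul_mul_cos_add_sq_pos (hρ : |ρ| < 1) (s : ℝ) :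
    0 < 1 - 2 * ρ * Real.cos s + ρ ^ 2 := by
  have h : ρ * Real.cos s ≤ |ρ| :=
    (le_abs_self _).trans <| by
      rw [abs_mul]
      exact mul_le_of_le_one_right (abs_nonneg ρ) (abs_cos_le_one s)
  nlinarith [sq_abs ρ, abs_nonneg ρ]

lemma continuous_poissonKernelPolar (hρ : |ρ| < 1) : Continuous (poissonKernelPolar ρ) :=
  continuous_const.div (by fun_prop) fun s => (one_sub_two_mul_mul_cos_add_sq_pos hρ s).ne'

lemma poissonKernelPolar_add_pi (ρ s : ℝ) :
    poissonKernelPolar ρ (s + π) = poissonKernelPolar (-ρ) s := by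
  rw [poissonKernelPolar, poissonKernelPolar, Real.cos_add_pi]
  ring

lemma poissonKernelPolar_periodic (ρ : ℝ) :
    Function.Periodic (poissonKernelPolar ρ) (2 * π) := fun s => by
  rw [poissonKernelPolar, poissonKernelPolar, Real.cos_add_two_pi]

lemma hasDerivAt_two_mul_arctan_mul_tan_half (hρ : |ρ| < 1) {s : ℝ}
    (hs : Real.cos (s / 2) ≠ 0) :
    HasDerivAt (fun x => 2 * Real.arctan ((1 + ρ) / (1 - ρ) * Real.tan (x / 2)))
      (poissonKernelPolar ρ s) s := by
  have htan : HasDerivAt (fun x => Real.tan (x / 2)) (1 / Real.cos (s / 2) ^ 2 * (1 / 2)) s :=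
    ((Real.hasDerivAt_tan hs).comp s ((hasDerivAt_id' s).div_const 2) :)
  refine (((Real.hasDerivAt_arctan _).comp s
    (htan.const_mul ((1 + ρ) / (1 - ρ)))).const_mul 2).congr_deriv ?_
  have hcos : Real.cos s = 2 * Real.cos (s / 2) ^ 2 - 1 := by
    rw [← Real.cos_two_mul, mul_div_cancel₀ s two_ne_zero]
  have hden := one_sub_two_mul_mul_cos_add_sq_pos hρ s
  have hρ₁ : 1 - ρ ≠ 0 := by linarith [(abs_lt.mp hρ).2]
  rw [hcos] at hden
  rw [poissonKernelPolar, hcos, Real.tan_eq_sin_div_cos]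
  field_simp
  linear_combination -(1 - ρ ^ 2) * (1 + ρ) ^ 2 * Real.sin_sq_add_cos_sq (s / 2)

lemma integral_poissonKernelPolar_neg_pi_div_two_pi_div_two (hρ : |ρ| < 1) :
    ∫ s in -(π / 2)..π / 2, poissonKernelPolar ρ s = 4 * Real.arctan ((1 + ρ) / (1 - ρ)) := by
  rw [intervalIntegral.integral_eq_sub_of_hasDerivAt
    (f := fun x => 2 * Real.arctan ((1 + ρ) / (1 - ρ) * Real.tan (x / 2))) (fun s hs => ?_)
    ((continuous_poissonKernelPolar hρ).intervalIntegrable _ _)]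
  · rw [show π / 2 / 2 = π / 4 by ring, show -(π / 2) / 2 = -(π / 4) by ring, Real.tan_neg,
      Real.tan_pi_div_four, mul_neg, mul_one, Real.arctan_neg]
    ring
  · rw [uIcc_of_le (by linarith [pi_pos])] at hs
    exact hasDerivAt_two_mul_arctan_mul_tan_half hρ
      (Real.cos_pos_of_mem_Ioo ⟨by linarith [pi_pos, hs.1], by linarith [pi_pos, hs.2]⟩).ne'

lemma div_one_add_sq_le_poissonKernelPolar (hr₀ : 0 ≤ r) (hr₁ : r < 1) {s : ℝ}
    (hs : 0 ≤ Real.cos s) : (1 - r ^ 2) / (1 + r ^ 2) ≤ poissonKernelPolar r s :=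
  div_le_div_of_nonneg_left (by nlinarith)
    (one_sub_two_mul_mul_cos_add_sq_pos (abs_lt.mpr ⟨by linarith, hr₁⟩) s)
    (by nlinarith [mul_nonneg hr₀ hs])

lemma poissonKernelPolar_le_div_one_add_sq (hr₀ : 0 ≤ r) (hr₁ : r < 1) {s : ℝ}
    (hs : Real.cos s ≤ 0) : poissonKernelPolar r s ≤ (1 - r ^ 2) / (1 + r ^ 2) :=
  div_le_div_of_nonneg_left (by nlinarith) (by positivity)
    (by nlinarith [mul_nonneg hr₀ (neg_nonneg.mpr hs)])

lemma integral_abs_poissonKernelPolar_sub (hr₀ : 0 ≤ r) (hr₁ : r < 1) :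
    ∫ s in -(π / 2)..3 * π / 2, |poissonKernelPolar r s - (1 - r ^ 2) / (1 + r ^ 2)| =
      8 * Real.arctan r := by
  have hr : |r| < 1 := abs_lt.mpr ⟨by linarith, hr₁⟩
  have hr' : |-r| < 1 := by rwa [abs_neg]
  set c := (1 - r ^ 2) / (1 + r ^ 2)
  have habs : Continuous fun s => |poissonKernelPolar r s - c| :=
    ((continuous_poissonKernelPolar hr).sub continuous_const).abs
  have hright : ∫ s in -(π / 2)..π / 2, |poissonKernelPolar r s - c| =
      ∫ s in -(π / 2)..π / 2, (poissonKernelPolar r s - c) := by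
    refine intervalIntegral.integral_congr fun s hs => abs_of_nonneg (sub_nonneg.mpr ?_)
    rw [uIcc_of_le (by linarith [pi_pos])] at hs
    exact div_one_add_sq_le_poissonKernelPolar hr₀ hr₁ (Real.cos_nonneg_of_mem_Icc hs)
  have hleft : ∫ s in π / 2..3 * π / 2, |poissonKernelPolar r s - c| =
      ∫ s in -(π / 2)..π / 2, (c - poissonKernelPolar (-r) s) := by
    have hshift := intervalIntegral.integral_comp_add_right (a := -(π / 2)) (b := π / 2)
      (fun s => |poissonKernelPolar r s - c|) π
    rw [show -(π / 2) + π = π / 2 by ring, show π / 2 + π = 3 * π / 2 by ring] at hshift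
    rw [← hshift]
    refine intervalIntegral.integral_congr fun s hs => ?_
    rw [uIcc_of_le (by linarith [pi_pos])] at hs
    rw [← poissonKernelPolar_add_pi, abs_sub_comm]
    refine abs_of_nonneg (sub_nonneg.mpr (poissonKernelPolar_le_div_one_add_sq hr₀ hr₁ ?_))
    exact Real.cos_nonpos_of_pi_div_two_le_of_le (by linarith [hs.1]) (by linarith [hs.2])
  rw [← intervalIntegral.integral_add_adjacent_intervals (b := π / 2)
      (habs.intervalIntegrable _ _) (habs.intervalIntegrable _ _), hright, hleft,
    intervalIntegral.integral_sub ((continuous_poissonKernelPolar hr).intervalIntegrable _ _)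
      intervalIntegrable_const,
    intervalIntegral.integral_sub intervalIntegrable_const
      ((continuous_poissonKernelPolar hr').intervalIntegrable _ _),
    integral_poissonKernelPolar_neg_pi_div_two_pi_div_two hr,
    integral_poissonKernelPolar_neg_pi_div_two_pi_div_two hr',
    Real.arctan_one_add_div_one_sub hr₁, Real.arctan_one_add_div_one_sub (by linarith),
    Real.arctan_neg]
  ring

lemma integral_abs_poissonKernelPolar_sub_comp_sub (hr₀ : 0 ≤ r) (hr₁ : r < 1) (θ : ℝ) :
    ∫ t in 0..2 * π, |poissonKernelPolar r (θ - t) - (1 - r ^ 2) / (1 + r ^ 2)| =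
      8 * Real.arctan r := by
  have hper : Function.Periodic
      (fun s => |poissonKernelPolar r s - (1 - r ^ 2) / (1 + r ^ 2)|) (2 * π) := fun s => by
    simp only [poissonKernelPolar_periodic r s]
  rw [intervalIntegral.integral_comp_sub_left
      (fun s => |poissonKernelPolar r s - (1 - r ^ 2) / (1 + r ^ 2)|) θ, sub_zero,
    ← integral_abs_poissonKernelPolar_sub hr₀ hr₁]
  convert hper.intervalIntegral_add_eq (θ - 2 * π) (-(π / 2)) using 2 <;> ring

lemma norm_integral_poissonKernelPolar_sub_mul_le (hr₀ : 0 ≤ r) (hr₁ : r < 1) (θ : ℝ)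
    {φ : ℝ → ℂ} {S : ℝ} (hφ : ∀ t, ‖φ t‖ ≤ S) :
    ‖∫ t in 0..2 * π,
        ((poissonKernelPolar r (θ - t) - (1 - r ^ 2) / (1 + r ^ 2) : ℝ) : ℂ) * φ t‖ ≤
      8 * Real.arctan r * S := by
  have hP := continuous_poissonKernelPolar (abs_lt.mpr ⟨by linarith, hr₁⟩)
  have hbound : Continuous fun t =>
      |poissonKernelPolar r (θ - t) - (1 - r ^ 2) / (1 + r ^ 2)| * S :=
    ((hP.comp (continuous_sub_left θ)).sub continuous_const).abs.mul continuous_const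
  calc _ ≤ ∫ t in 0..2 * π, |poissonKernelPolar r (θ - t) - (1 - r ^ 2) / (1 + r ^ 2)| * S := by
        refine intervalIntegral.norm_integral_le_of_norm_le (by positivity)
          (Filter.Eventually.of_forall fun t _ => ?_) (hbound.intervalIntegrable _ _)
        rw [norm_mul, Complex.norm_real, Real.norm_eq_abs]
        exact mul_le_mul_of_nonneg_left (hφ t) (abs_nonneg _)
    _ = 8 * Real.arctan r * S := by
        rw [intervalIntegral.integral_mul_const,
          integral_abs_poissonKernelPolar_sub_comp_sub hr₀ hr₁]

end PoissonKernelPolar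

section UnitDisc

variable {w : ℂ}

lemma re_one_sub_conj_pos (hw : ‖w‖ < 1) : 0 < (1 - (starRingEnd ℂ) w).re := by
  rw [sub_re, one_re, conj_re]
  linarith [re_le_norm w]

lemma one_sub_conj_ne_zero (hw : ‖w‖ < 1) : 1 - (starRingEnd ℂ) w ≠ 0 := fun h => by
  simpa [h] using re_one_sub_conj_pos hw

lemma one_sub_norm_sq_pos (hw : ‖w‖ < 1) : 0 < 1 - ‖w‖ ^ 2 := by
  nlinarith [norm_nonneg w]

lemma gAlpha_eq_div_cpow (α : ℝ) (hw : ‖w‖ < 1) :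
    gAlpha α w = ((1 - ‖w‖ ^ 2 : ℝ) : ℂ) ^ (α : ℂ) / (1 - (starRingEnd ℂ) w) ^ (α : ℂ) :=
  ofReal_div_cpow (one_sub_norm_sq_pos hw) (one_sub_conj_ne_zero hw)
    (fun h => (re_one_sub_conj_pos hw).not_ge (arg_eq_pi_iff.mp h).1.le) _

lemma poissonKernelAlpha_eq_mul_gAlpha (α : ℝ) (hw : ‖w‖ < 1) :
    poissonKernelAlpha α w = (((1 - ‖w‖ ^ 2) / ‖1 - w‖ ^ 2 : ℝ) : ℂ) * gAlpha α w := by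
  have hx := one_sub_norm_sq_pos hw
  have hv := one_sub_conj_ne_zero hw
  have hnorm : (1 - w) * (1 - (starRingEnd ℂ) w) = ((‖1 - w‖ ^ 2 : ℝ) : ℂ) := by
    rw [show 1 - (starRingEnd ℂ) w = (starRingEnd ℂ) (1 - w) by simp, mul_conj,
      normSq_eq_norm_sq, ofReal_pow]
  have hw' : 1 - w ≠ 0 := fun h => by
    rw [← sub_eq_zero.mp h, norm_one] at hw
    exact lt_irrefl _ hw
  rw [poissonKernelAlpha, gAlpha_eq_div_cpow α hw, Real.rpow_add hx, Real.rpow_one,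
    cpow_add _ _ hv, cpow_one, ofReal_mul, ofReal_cpow hx.le,
    show (1 - w) * ((1 - (starRingEnd ℂ) w) ^ (α : ℂ) * (1 - (starRingEnd ℂ) w)) =
      (1 - w) * (1 - (starRingEnd ℂ) w) * (1 - (starRingEnd ℂ) w) ^ (α : ℂ) by ring, hnorm]
  have : ((‖1 - w‖ ^ 2 : ℝ) : ℂ) ≠ 0 := by
    exact_mod_cast pow_ne_zero 2 (norm_ne_zero_iff.mpr hw')
  have : (1 - (starRingEnd ℂ) w) ^ (α : ℂ) ≠ 0 := cpow_ne_zero_iff.mpr (Or.inl hv)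
  push_cast
  field_simp

lemma norm_gAlpha (α : ℝ) (hw : ‖w‖ < 1) :
    ‖gAlpha α w‖ = ((1 - ‖w‖ ^ 2) / ‖1 - (starRingEnd ℂ) w‖) ^ α := by
  rw [gAlpha, norm_cpow_real, norm_div, norm_real, Real.norm_of_nonneg (one_sub_norm_sq_pos hw).le]

lemma one_sub_norm_le_div_norm_one_sub_conj (hw : ‖w‖ < 1) :
    1 - ‖w‖ ≤ (1 - ‖w‖ ^ 2) / ‖1 - (starRingEnd ℂ) w‖ := by
  have h : ‖1 - (starRingEnd ℂ) w‖ ≤ 1 + ‖w‖ := by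
    simpa using norm_sub_le (1 : ℂ) ((starRingEnd ℂ) w)
  rw [le_div_iff₀ (norm_pos_iff.mpr (one_sub_conj_ne_zero hw))]
  nlinarith [norm_nonneg w]

lemma div_norm_one_sub_conj_le_one_add_norm (hw : ‖w‖ < 1) :
    (1 - ‖w‖ ^ 2) / ‖1 - (starRingEnd ℂ) w‖ ≤ 1 + ‖w‖ := by
  have h : 1 - ‖w‖ ≤ ‖1 - (starRingEnd ℂ) w‖ := by
    simpa using norm_sub_norm_le (1 : ℂ) ((starRingEnd ℂ) w)
  rw [div_le_iff₀ (norm_pos_iff.mpr (one_sub_conj_ne_zero hw))]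
  nlinarith [norm_nonneg w]

lemma norm_gAlpha_le_one_add_norm_rpow {α : ℝ} (hα : 0 ≤ α) (hw : ‖w‖ < 1) :
    ‖gAlpha α w‖ ≤ (1 + ‖w‖) ^ α := by
  rw [norm_gAlpha α hw]
  exact Real.rpow_le_rpow (by linarith [one_sub_norm_le_div_norm_one_sub_conj hw])
    (div_norm_one_sub_conj_le_one_add_norm hw) hα

lemma norm_gAlpha_le_one_sub_norm_rpow {α : ℝ} (hα : α ≤ 0) (hw : ‖w‖ < 1) :
    ‖gAlpha α w‖ ≤ (1 - ‖w‖) ^ α := by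
  rw [norm_gAlpha α hw]
  exact Real.rpow_le_rpow_of_nonpos (by linarith) (one_sub_norm_le_div_norm_one_sub_conj hw) hα

end UnitDisc

lemma continuousOn_gAlpha (α : ℝ) : ContinuousOn (gAlpha α) (Metric.ball 0 1) := by
  intro w hw
  rw [mem_ball_zero_iff] at hw
  have hbase : 0 < (((1 - ‖w‖ ^ 2 : ℝ) : ℂ) / (1 - (starRingEnd ℂ) w)).re := by
    rw [div_re, ofReal_re, ofReal_im, zero_mul, zero_div, add_zero, mul_div_assoc]
    exact mul_pos (one_sub_norm_sq_pos hw)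
      (div_pos (re_one_sub_conj_pos hw) (normSq_pos.mpr (one_sub_conj_ne_zero hw)))
  refine ContinuousAt.continuousWithinAt (ContinuousAt.cpow ?_ continuousAt_const (Or.inl hbase))
  exact (continuous_ofReal.comp (by fun_prop)).continuousAt.div (by fun_prop)
    (one_sub_conj_ne_zero hw)

section CircleSupNorm

variable {g : ℂ → ℂ}

lemma norm_le_circleSupNorm {w : ℂ} (hg : ContinuousOn g (Metric.sphere 0 ‖w‖)) :
    ‖g w‖ ≤ circleSupNorm ‖w‖ g := by
  have hcircle : Continuous fun θ : ℝ => ((‖w‖ : ℝ) : ℂ) * cexp (I * θ) := by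
    fun_prop
  have hsphere : ∀ θ : ℝ, ((‖w‖ : ℝ) : ℂ) * cexp (I * θ) ∈ Metric.sphere 0 ‖w‖ :=
    fun θ => by simp [mul_comm I]
  have hbdd : BddAbove (Set.range fun θ : Icc (0 : ℝ) (2 * π) =>
      ‖g (((‖w‖ : ℝ) : ℂ) * cexp (I * (θ : ℝ)))‖) := by
    have h := (isCompact_Icc (a := (0 : ℝ)) (b := 2 * π)).bddAbove_image
      (hg.comp_continuous hcircle hsphere).norm.continuousOn
    rwa [Set.image_eq_range] at h
  have hper : Function.Periodic (fun θ : ℝ => cexp (θ * I)) (2 * π) := fun θ => by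
    simpa using exp_mul_I_periodic (θ : ℂ)
  obtain ⟨θ, hθ, hwθ⟩ := hper.exists_mem_Ico₀ two_pi_pos w.arg
  refine le_ciSup_of_le hbdd ⟨θ, mem_Icc_of_Ico hθ⟩ (le_of_eq ?_)
  rw [mul_comm I, ← hwθ, norm_mul_exp_arg_mul_I]

lemma circleSupNorm_le {r B : ℝ} (hr : 0 ≤ r) (hB : ∀ w, ‖w‖ = r → ‖g w‖ ≤ B) :
    circleSupNorm r g ≤ B := by
  have : Nonempty (Icc (0 : ℝ) (2 * π)) := ⟨⟨0, le_rfl, two_pi_pos.le⟩⟩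
  refine ciSup_le fun θ => hB _ ?_
  rw [norm_mul, norm_real, Real.norm_of_nonneg hr, mul_comm I, norm_exp_ofReal_mul_I, mul_one]

lemma circleSupNorm_nonneg (r : ℝ) (g : ℂ → ℂ) : 0 ≤ circleSupNorm r g :=
  Real.iSup_nonneg fun _ => norm_nonneg _

end CircleSupNorm

lemma norm_one_sub_ofReal_mul_exp_sq (r s : ℝ) :
    ‖1 - (r : ℂ) * cexp (s * I)‖ ^ 2 = 1 - 2 * r * Real.cos s + r ^ 2 := by
  rw [← normSq_eq_norm_sq, normSq_apply, exp_mul_I]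
  simp only [← ofReal_cos, ← ofReal_sin, sub_re, sub_im, one_re, one_im, mul_re, mul_im, add_re,
    add_im, ofReal_re, ofReal_im, I_re, I_im]
  linear_combination r ^ 2 * Real.sin_sq_add_cos_sq s

lemma norm_mul_exp_neg_I_mul (z : ℂ) (t : ℝ) : ‖z * cexp (-I * t)‖ = ‖z‖ := by
  simp [norm_exp]

lemma mul_exp_neg_I_mul_eq_polar (z : ℂ) (t : ℝ) :
    z * cexp (-I * t) =
      ((‖z‖ : ℝ) : ℂ) * cexp (((z.arg - t : ℝ) : ℂ) * I) := by
  conv_lhs => rw [← norm_mul_exp_arg_mul_I z]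
  rw [mul_assoc, ← Complex.exp_add]
  push_cast
  ring_nf

section PoissonExt

variable {α : ℝ} {fs : ℝ → ℂ} {z : ℂ}

lemma poissonKernelAlpha_mul_exp_neg_I_mul (hz : ‖z‖ < 1) (t : ℝ) :
    poissonKernelAlpha α (z * cexp (-I * t)) =
      (poissonKernelPolar ‖z‖ (z.arg - t) : ℂ) * gAlpha α (z * cexp (-I * t)) := by
  rw [poissonKernelAlpha_eq_mul_gAlpha α ((norm_mul_exp_neg_I_mul z t).symm ▸ hz),
    norm_mul_exp_neg_I_mul, mul_exp_neg_I_mul_eq_polar z t, norm_one_sub_ofReal_mul_exp_sq,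
    poissonKernelPolar]

lemma continuous_gAlpha_mul_exp_neg_I_mul (hz : ‖z‖ < 1) :
    Continuous fun t : ℝ => gAlpha α (z * cexp (-I * t)) :=
  (continuousOn_gAlpha α).comp_continuous (by fun_prop) fun t => by
    rw [mem_ball_zero_iff, norm_mul_exp_neg_I_mul]
    exact hz

lemma norm_gAlpha_mul_exp_neg_I_mul_le (hz : ‖z‖ < 1) (t : ℝ) :
    ‖gAlpha α (z * cexp (-I * t))‖ ≤ circleSupNorm ‖z‖ (gAlpha α) := by
  have hw := norm_mul_exp_neg_I_mul z t
  rw [← hw]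
  exact norm_le_circleSupNorm ((continuousOn_gAlpha α).mono (Metric.sphere_subset_ball (hw ▸ hz)))


lemma poissonExt_sub_eq_integral (hfs : Continuous fs) (hz : ‖z‖ < 1) :
    poissonExt α fs z - (((1 - ‖z‖ ^ 2) / (1 + ‖z‖ ^ 2) : ℝ) : ℂ) *
        ((1 / (2 * π) : ℂ) *
          ∫ t in 0..2 * π, gAlpha α (z * cexp (-I * t)) * fs t) =
      (1 / (2 * π) : ℂ) * ∫ t in 0..2 * π,
        ((poissonKernelPolar ‖z‖ (z.arg - t) - (1 - ‖z‖ ^ 2) / (1 + ‖z‖ ^ 2) : ℝ) : ℂ) *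
          (gAlpha α (z * cexp (-I * t)) * fs t) := by
  have hg : Continuous fun t : ℝ => gAlpha α (z * cexp (-I * t)) * fs t :=
    (continuous_gAlpha_mul_exp_neg_I_mul hz).mul hfs
  have hP : Continuous fun t : ℝ => (poissonKernelPolar ‖z‖ (z.arg - t) : ℂ) :=
    continuous_ofReal.comp ((continuous_poissonKernelPolar
      (abs_lt.mpr ⟨by linarith [norm_nonneg z], hz⟩)).comp (continuous_sub_left z.arg))
  simp_rw [poissonExt, poissonKernelAlpha_mul_exp_neg_I_mul hz, mul_assoc _ _ (fs _)]
  rw [mul_left_comm, ← mul_sub, ← intervalIntegral.integral_const_mul,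
    ← intervalIntegral.integral_sub]
  · simp_rw [ofReal_sub, sub_mul]
  · exact (hP.mul hg).intervalIntegrable _ _
  · exact (continuous_const.mul hg).intervalIntegrable _ _

theorem norm_poissonExt_sub_le (hfs : Continuous fs) (hbd : ∀ t, ‖fs t‖ ≤ 1) (hz : ‖z‖ < 1) :
    ‖poissonExt α fs z - (((1 - ‖z‖ ^ 2) / (1 + ‖z‖ ^ 2) : ℝ) : ℂ) *
        ((1 / (2 * π) : ℂ) *
          ∫ t in 0..2 * π, gAlpha α (z * cexp (-I * t)) * fs t)‖ ≤
      4 / π * circleSupNorm ‖z‖ (gAlpha α) * Real.arctan ‖z‖ := by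
  have hφ : ∀ t : ℝ, ‖gAlpha α (z * cexp (-I * t)) * fs t‖ ≤
      circleSupNorm ‖z‖ (gAlpha α) := fun t => by
    rw [norm_mul]
    exact (mul_le_mul (norm_gAlpha_mul_exp_neg_I_mul_le hz t) (hbd t) (norm_nonneg _)
      (circleSupNorm_nonneg _ _)).trans_eq (mul_one _)
  rw [poissonExt_sub_eq_integral hfs hz, norm_mul, one_div, norm_inv, norm_mul,
    Complex.norm_ofNat, Complex.norm_real, Real.norm_of_nonneg pi_pos.le]
  calc _ ≤ (2 * π)⁻¹ * (8 * Real.arctan ‖z‖ * circleSupNorm ‖z‖ (gAlpha α)) := by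
        gcongr
        exact norm_integral_poissonKernelPolar_sub_mul_le (norm_nonneg z) hz z.arg hφ
    _ = 4 / π * circleSupNorm ‖z‖ (gAlpha α) * Real.arctan ‖z‖ := by
        field_simp
        ring

end PoissonExt

theorem schwarz_type_gAlpha_general (α : ℝ) (fs : ℝ → ℂ) (hcont : Continuous fs)
    (hbd : ∀ t : ℝ, ‖fs t‖ ≤ 1) :
    (∀ z ∈ Metric.ball (0 : ℂ) 1,
        ‖poissonExt α fs z -
            ((((1 - ‖z‖ ^ 2) / (1 + ‖z‖ ^ 2) : ℝ)) : ℂ) *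
              ((1 / (2 * Real.pi) : ℂ) *
                ∫ t in (0:ℝ)..(2 * Real.pi), gAlpha α (z * Complex.exp (-Complex.I * t)) * fs t)‖ ≤
          4 / Real.pi *
              (⨆ θ : Set.Icc (0:ℝ) (2 * Real.pi),
                ‖gAlpha α (((‖z‖ : ℝ) : ℂ) * Complex.exp (Complex.I * (θ : ℝ)))‖) *
            Real.arctan (‖z‖)) ∧
      (0 ≤ α →
        ∀ z ∈ Metric.ball (0 : ℂ) 1,
          ‖poissonExt α fs z -
              ((((1 - ‖z‖ ^ 2) / (1 + ‖z‖ ^ 2) : ℝ)) : ℂ) *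
                ((1 / (2 * Real.pi) : ℂ) *
                  ∫ t in (0:ℝ)..(2 * Real.pi), gAlpha α (z * Complex.exp (-Complex.I * t)) * fs t)‖ ≤
            (2 : ℝ) ^ (α + 2) / Real.pi * Real.arctan (‖z‖)) ∧
      (α < 0 →
        ∀ z ∈ Metric.ball (0 : ℂ) 1,
          ‖poissonExt α fs z -
              ((((1 - ‖z‖ ^ 2) / (1 + ‖z‖ ^ 2) : ℝ)) : ℂ) *
                ((1 / (2 * Real.pi) : ℂ) *
                  ∫ t in (0:ℝ)..(2 * Real.pi), gAlpha α (z * Complex.exp (-Complex.I * t)) * fs t)‖ ≤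
            4 / Real.pi * (1 - ‖z‖) ^ α * Real.arctan (‖z‖)) := by
  have hmain := fun z (hz : z ∈ Metric.ball (0 : ℂ) 1) =>
    norm_poissonExt_sub_le (α := α) hcont hbd (mem_ball_zero_iff.mp hz)
  refine ⟨hmain, fun hα z hz => (hmain z hz).trans ?_, fun hα z hz => (hmain z hz).trans ?_⟩
  all_goals
    have hz := mem_ball_zero_iff.mp hz
    have harctan : 0 ≤ Real.arctan ‖z‖ := Real.arctan_nonneg.mpr (norm_nonneg z)
  · calc _ ≤ 4 / π * 2 ^ α * Real.arctan ‖z‖ := by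
          gcongr
          refine circleSupNorm_le (norm_nonneg z) fun w hw => ?_
          calc ‖gAlpha α w‖ ≤ (1 + ‖w‖) ^ α := norm_gAlpha_le_one_add_norm_rpow hα (hw ▸ hz)
            _ ≤ 2 ^ α := by gcongr; linarith
      _ = 2 ^ (α + 2) / π * Real.arctan ‖z‖ := by
          rw [Real.rpow_add two_pos, Real.rpow_two]
          ring
  · gcongr
    exact circleSupNorm_le (norm_nonneg z) fun w hw =>
      hw ▸ norm_gAlpha_le_one_sub_norm_rpow hα.le (hw ▸ hz)

/-- For a continuous `2π`-periodic boundary function `f*` bounded by `1`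
and `f = P_α[f*]`, `G_α(z) = (1/2π)∫₀^{2π} g_α(z e^{-it}) f*(t) dt`:
`|f(z) - ((1-|z|²)/(1+|z|²)) G_α(z)| ≤ (4/π) (sup_{0≤θ≤2π} |g_α(|z|e^{iθ})|) arctan|z|`,
with the stated particular bounds for `α ≥ 0` and `-1 < α < 0`. -/
theorem schwarz_type_gAlpha (α : ℝ) (hα : -1 < α) (fs : ℝ → ℂ) (hcont : Continuous fs)
    (hper : Function.Periodic fs (2 * Real.pi)) (hbd : ∀ t : ℝ, ‖fs t‖ ≤ 1) :
    (∀ z ∈ Metric.ball (0 : ℂ) 1,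
        ‖poissonExt α fs z -
            ((((1 - ‖z‖ ^ 2) / (1 + ‖z‖ ^ 2) : ℝ)) : ℂ) *
              ((1 / (2 * Real.pi) : ℂ) *
                ∫ t in (0:ℝ)..(2 * Real.pi), gAlpha α (z * Complex.exp (-Complex.I * t)) * fs t)‖ ≤
          4 / Real.pi *
              (⨆ θ : Set.Icc (0:ℝ) (2 * Real.pi),
                ‖gAlpha α (((‖z‖ : ℝ) : ℂ) * Complex.exp (Complex.I * (θ : ℝ)))‖) *
            Real.arctan (‖z‖)) ∧
      (0 ≤ α →
        ∀ z ∈ Metric.ball (0 : ℂ) 1,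
          ‖poissonExt α fs z -
              ((((1 - ‖z‖ ^ 2) / (1 + ‖z‖ ^ 2) : ℝ)) : ℂ) *
                ((1 / (2 * Real.pi) : ℂ) *
                  ∫ t in (0:ℝ)..(2 * Real.pi), gAlpha α (z * Complex.exp (-Complex.I * t)) * fs t)‖ ≤
            (2 : ℝ) ^ (α + 2) / Real.pi * Real.arctan (‖z‖)) ∧
      (α < 0 →
        ∀ z ∈ Metric.ball (0 : ℂ) 1,
          ‖poissonExt α fs z -
              ((((1 - ‖z‖ ^ 2) / (1 + ‖z‖ ^ 2) : ℝ)) : ℂ) *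
                ((1 / (2 * Real.pi) : ℂ) *
                  ∫ t in (0:ℝ)..(2 * Real.pi), gAlpha α (z * Complex.exp (-Complex.I * t)) * fs t)‖ ≤
            4 / Real.pi * (1 - ‖z‖) ^ α * Real.arctan (‖z‖)) :=
  schwarz_type_gAlpha_general α fs hcont hbd
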